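/- arXiv:0712.1309 — 8 statements merged into one kernel-verified Lean document; each statement's English description precedes it below -/
import Mathlib

section
/- Let n ≥ 2 be an integer and z ∈ ℂ with |z| > 1. If μ₂(F_z) > 0 and μ₂((F_z + i) ∩ (F_z + i')) = 0 for all distinct digits i, i' ∈ {0,1,…,n−1}, then |z|² = n. -/
open MeasureTheory

/-- The fractional-part set `F_z` for base `z` and digits `{0,…,n-1}`. -/
def Fset (n : ℕ) (z : ℂ) : Set ℂ :=
  { x | ∃ a : ℕ → ℕ, (∀ i, a i < n) ∧ x = ∑' i : ℕ, (a i : ℂ) * z⁻¹ ^ (i + 1) }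

/-!
Multiplication by `z` scales Lebesgue measure on `ℂ` by `|z|²`, so the selfsimilarity
equation `z • F_z = ⋃_{i<n} (F_z + i)` gives `|z|² μ₂(F_z) = μ₂(⋃_{i<n} (F_z + i))`. The
translates are pairwise almost disjoint and have the measure of `F_z`, so the right-hand side
is `n μ₂(F_z)`. Since `F_z` is compact, `μ₂(F_z)` is finite and can be cancelled.
-/

section DigitSeries

variable {n : ℕ}

lemma norm_inv_lt_one_of_one_lt_norm {z : ℂ} (hz : 1 < ‖z‖) : ‖z⁻¹‖ < 1 := by
  rw [norm_inv]
  exact inv_lt_one_of_one_lt₀ hz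

lemma norm_natCast_mul_pow_le {a : ℕ} (ha : a < n) (w : ℂ) (k : ℕ) :
    ‖(a : ℂ) * w ^ k‖ ≤ n * ‖w‖ ^ k := by
  rw [norm_mul, norm_pow, Complex.norm_natCast]
  gcongr

lemma summable_natCast_mul_norm_pow_add {w : ℂ} (hw : ‖w‖ < 1) (k : ℕ) :
    Summable fun i : ℕ => (n : ℝ) * ‖w‖ ^ (i + k) :=
  ((summable_nat_add_iff k).mpr (summable_geometric_of_lt_one (norm_nonneg w) hw)).mul_left _

lemma summable_digits_mul_pow_add {w : ℂ} (hw : ‖w‖ < 1) {a : ℕ → ℕ} (ha : ∀ i, a i < n)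
    (k : ℕ) : Summable fun i : ℕ => (a i : ℂ) * w ^ (i + k) :=
  .of_norm_bounded (summable_natCast_mul_norm_pow_add hw k)
    fun i => norm_natCast_mul_pow_le (ha i) w _

variable {z : ℂ}

lemma mul_tsum_digits (hz : 1 < ‖z‖) {a : ℕ → ℕ} (ha : ∀ i, a i < n) :
    z * ∑' i : ℕ, (a i : ℂ) * z⁻¹ ^ (i + 1) =
      a 0 + ∑' i : ℕ, (a (i + 1) : ℂ) * z⁻¹ ^ (i + 1) := by
  have hz0 : z ≠ 0 := norm_pos_iff.mp (one_pos.trans hz)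
  have hw := norm_inv_lt_one_of_one_lt_norm hz
  have hshift : ∀ i : ℕ, z * ((a i : ℂ) * z⁻¹ ^ (i + 1)) = a i * z⁻¹ ^ (i + 0) := fun i => by
    rw [add_zero, pow_succ]
    field_simp
  simp_rw [← tsum_mul_left, hshift, (summable_digits_mul_pow_add hw ha 0).tsum_eq_zero_add]
  simp

lemma Fset_eq_range (n : ℕ) (z : ℂ) :
    Fset n z = Set.range fun a : ℕ → Fin n => ∑' i : ℕ, ((a i : ℕ) : ℂ) * z⁻¹ ^ (i + 1) := by
  ext x
  constructor
  · rintro ⟨a, ha, rfl⟩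
    exact ⟨fun i => ⟨a i, ha i⟩, rfl⟩
  · rintro ⟨a, rfl⟩
    exact ⟨fun i => a i, fun i => (a i).isLt, rfl⟩

lemma isCompact_Fset (n : ℕ) (hz : 1 < ‖z‖) : IsCompact (Fset n z) := by
  have hw := norm_inv_lt_one_of_one_lt_norm hz
  rw [Fset_eq_range]
  refine isCompact_range (continuous_tsum (fun i => ?_) (summable_natCast_mul_norm_pow_add hw 1)
    fun i a => norm_natCast_mul_pow_le (a i).isLt _ _)
  exact ((continuous_of_discreteTopology (f := fun j : Fin n => ((j : ℕ) : ℂ))).comp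
    (continuous_apply i)).mul continuous_const

lemma image_mul_Fset (hz : 1 < ‖z‖) :
    (z * ·) '' Fset n z = ⋃ i ∈ Finset.range n, (· + (i : ℂ)) '' Fset n z := by
  ext y
  simp only [Set.mem_image, Set.mem_iUnion, Finset.mem_range]
  constructor
  · rintro ⟨x, ⟨a, ha, rfl⟩, rfl⟩
    refine ⟨a 0, ha 0, _, ⟨fun i => a (i + 1), fun i => ha _, rfl⟩, ?_⟩
    rw [mul_tsum_digits hz ha, add_comm]
  · rintro ⟨i, hi, x, ⟨a, ha, rfl⟩, rfl⟩
    let b : ℕ → ℕ := fun j => Nat.casesOn j i a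
    have hb : ∀ j, b j < n := fun j => by cases j with
      | zero => exact hi
      | succ k => exact ha k
    refine ⟨_, ⟨b, hb, rfl⟩, ?_⟩
    rw [mul_tsum_digits hz hb, add_comm]
    rfl

end DigitSeries

lemma Complex.volume_image_mul_left (z : ℂ) (s : Set ℂ) :
    volume ((z * ·) '' s) = ENNReal.ofReal (‖z‖ ^ 2) * volume s := by
  have hdet : LinearMap.det (LinearMap.mul ℝ ℂ z) = ‖z‖ ^ 2 := by
    rw [Complex.sq_norm, ← Algebra.norm_complex_apply, Algebra.norm_apply,
      Algebra.coe_lmul_eq_mul]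
  simpa [hdet, LinearMap.mul_apply'] using
    Measure.addHaar_image_linearMap volume (LinearMap.mul ℝ ℂ z) s

open Function in
lemma measure_biUnion_finset_image_add_right {G ι : Type*} [MeasurableSpace G] [AddGroup G]
    [MeasurableAdd G] (μ : Measure G) [μ.IsAddRightInvariant] {s : Set G}
    (hs : MeasurableSet s) (I : Finset ι) (t : ι → G)
    (hdisj : (I : Set ι).Pairwise (AEDisjoint μ on fun i => (fun x => x + t i) '' s)) :
    μ (⋃ i ∈ I, (fun x => x + t i) '' s) = I.card * μ s := by
  simp_rw [Set.image_add_right]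
  simp_rw [Set.image_add_right] at hdisj
  rw [measure_biUnion_finset₀ hdisj
    fun i _ => (hs.preimage (measurable_add_const _)).nullMeasurableSet]
  simp only [measure_preimage_add_right, Finset.sum_const, nsmul_eq_mul]

theorem stmt_4_general (n : ℕ) (z : ℂ) (hz : 1 < ‖z‖)
    (hpos : 0 < volume (Fset n z))
    (hdisj : ∀ i i' : ℕ, i < n → i' < n → i ≠ i' →
      volume (((fun x => x + (i : ℂ)) '' Fset n z) ∩
              ((fun x => x + (i' : ℂ)) '' Fset n z)) = 0) :
    ‖z‖ ^ 2 = n := by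
  have hF := isCompact_Fset n hz
  have hscale : ENNReal.ofReal (‖z‖ ^ 2) * volume (Fset n z) = n * volume (Fset n z) := by
    rw [← Complex.volume_image_mul_left, image_mul_Fset hz,
      measure_biUnion_finset_image_add_right volume hF.measurableSet _ _ fun i hi i' hi' =>
        hdisj i i' (Finset.mem_range.mp hi) (Finset.mem_range.mp hi'), Finset.card_range]
  have hofReal := (ENNReal.mul_left_inj hpos.ne' hF.measure_lt_top.ne).mp hscale
  simpa [ENNReal.toReal_ofReal (sq_nonneg ‖z‖)] using congrArg ENNReal.toReal hofReal

theorem stmt_4 (n : ℕ) (hn : 2 ≤ n) (z : ℂ) (hz : 1 < ‖z‖)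
    (hpos : 0 < volume (Fset n z))
    (hdisj : ∀ i i' : ℕ, i < n → i' < n → i ≠ i' →
      volume (((fun x => x + (i : ℂ)) '' Fset n z) ∩
              ((fun x => x + (i' : ℂ)) '' Fset n z)) = 0) :
    ‖z‖ ^ 2 = n :=
  stmt_4_general n z hz hpos hdisj
end

section
/- For every integer n ≥ 2 and every z ∈ ℂ with |z| > 1, the fractional-part set of the negated base is a translate of the original: F_{−z} = F_z − (n−1)z/(z² − 1) = { x − (n−1)z/(z²−1) : x ∈ F_z }. -/
theorem summable_mul_pow_succ_of_norm_le {w : ℂ} (hw : ‖w‖ < 1) {f : ℕ → ℂ} {C : ℝ}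
    (hf : ∀ i, ‖f i‖ ≤ C) : Summable fun i => f i * w ^ (i + 1) := by
  refine .of_norm_bounded ((summable_geometric_of_lt_one (norm_nonneg w) hw).mul_left C) fun i => ?_
  rw [norm_mul, norm_pow]
  have hC : 0 ≤ C := (norm_nonneg _).trans (hf 0)
  exact mul_le_mul (hf i) (pow_le_pow_of_le_one (norm_nonneg w) hw.le (Nat.le_succ i))
    (by positivity) hC

theorem hasSum_pow_two_mul_add_one {w : ℂ} (hw : ‖w‖ < 1) :
    HasSum (fun k : ℕ => w ^ (2 * k + 1)) (w / (1 - w ^ 2)) := by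
  have hw2 : ‖w ^ 2‖ < 1 := by rw [norm_pow]; exact pow_lt_one₀ (norm_nonneg w) hw two_ne_zero
  rw [div_eq_mul_inv]
  have hpow : (fun k : ℕ => w ^ (2 * k + 1)) = fun k => w * (w ^ 2) ^ k :=
    funext fun k => by ring
  rw [hpow]
  exact (hasSum_geometric_of_norm_lt_one hw2).mul_left w

theorem hasSum_ite_even_mul_pow_succ {w : ℂ} (hw : ‖w‖ < 1) (c : ℂ) :
    HasSum (fun i : ℕ => if Even i then c * w ^ (i + 1) else 0) (c * (w / (1 - w ^ 2))) := by
  have heven : HasSum (fun k : ℕ => if Even (2 * k) then c * w ^ (2 * k + 1) else 0)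
      (c * (w / (1 - w ^ 2))) := by
    simp only [even_two_mul, if_true]
    exact (hasSum_pow_two_mul_add_one hw).mul_left c
  have hodd : HasSum (fun k : ℕ => if Even (2 * k + 1) then c * w ^ (2 * k + 1 + 1) else 0) 0 := by
    simp only [Nat.not_even_two_mul_add_one, if_false]
    exact hasSum_zero
  simpa only [add_zero] using
    HasSum.even_add_odd (f := fun i : ℕ => if Even i then c * w ^ (i + 1) else 0) heven hodd

def flipEvenDigits (n : ℕ) (a : ℕ → ℕ) (i : ℕ) : ℕ :=
  if Even i then n - 1 - a i else a i

section flipEvenDigits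

variable {n : ℕ} {a : ℕ → ℕ}

theorem flipEvenDigits_lt (ha : ∀ i, a i < n) (i : ℕ) : flipEvenDigits n a i < n := by
  have := ha i
  unfold flipEvenDigits
  split <;> omega

theorem flipEvenDigits_flipEvenDigits (ha : ∀ i, a i < n) :
    flipEvenDigits n (flipEvenDigits n a) = a := by
  funext i
  have := ha i
  unfold flipEvenDigits
  split <;> omega

theorem natCast_mul_neg_pow_succ (ha : ∀ i, a i < n) (w : ℂ) (i : ℕ) :
    (a i : ℂ) * (-w) ^ (i + 1) =
      flipEvenDigits n a i * w ^ (i + 1) - if Even i then ((n : ℂ) - 1) * w ^ (i + 1) else 0 := by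
  unfold flipEvenDigits
  by_cases hi : Even i
  · have hcast : ((n - 1 - a i : ℕ) : ℂ) = n - 1 - a i := by
      have := ha i
      rw [Nat.sub_sub, Nat.cast_sub (by omega), Nat.cast_add, Nat.cast_one, sub_add_eq_sub_sub]
    rw [if_pos hi, if_pos hi, hi.add_one.neg_pow, hcast]
    ring
  · rw [if_neg hi, if_neg hi, (Nat.not_even_iff_odd.mp hi).add_one.neg_pow, sub_zero]

theorem tsum_natCast_mul_neg_pow_succ (ha : ∀ i, a i < n) {w : ℂ} (hw : ‖w‖ < 1) :
    ∑' i, (a i : ℂ) * (-w) ^ (i + 1) =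
      ∑' i, (flipEvenDigits n a i : ℂ) * w ^ (i + 1) - ((n : ℂ) - 1) * (w / (1 - w ^ 2)) := by
  have hflip : Summable fun i => (flipEvenDigits n a i : ℂ) * w ^ (i + 1) :=
    summable_mul_pow_succ_of_norm_le hw (C := n) fun i => by
      simpa using (flipEvenDigits_lt ha i).le
  simp_rw [natCast_mul_neg_pow_succ ha w]
  exact (hflip.hasSum.sub (hasSum_ite_even_mul_pow_succ hw _)).tsum_eq

end flipEvenDigits

theorem inv_div_one_sub_inv_sq (z : ℂ) : z⁻¹ / (1 - z⁻¹ ^ 2) = z / (z ^ 2 - 1) := by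
  rcases eq_or_ne z 0 with rfl | hz
  · simp
  rw [← mul_div_mul_left _ _ (pow_ne_zero 2 hz)]
  congr 1 <;> field_simp

theorem stmt_6_general (n : ℕ) (z : ℂ) (hz : 1 < ‖z‖) :
    Fset n (-z) = (fun x => x - ((n : ℂ) - 1) * z / (z ^ 2 - 1)) '' Fset n z := by
  have hw : ‖z⁻¹‖ < 1 := by rwa [norm_inv, inv_lt_one₀ (one_pos.trans hz)]
  have hshift (a : ℕ → ℕ) (ha : ∀ i, a i < n) :
      ∑' i, (a i : ℂ) * (-z)⁻¹ ^ (i + 1) =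
        ∑' i, (flipEvenDigits n a i : ℂ) * z⁻¹ ^ (i + 1) - ((n : ℂ) - 1) * z / (z ^ 2 - 1) := by
    rw [inv_neg, tsum_natCast_mul_neg_pow_succ ha hw, inv_div_one_sub_inv_sq, mul_div_assoc]
  ext x
  constructor
  · rintro ⟨a, ha, rfl⟩
    exact ⟨_, ⟨flipEvenDigits n a, flipEvenDigits_lt ha, rfl⟩, (hshift a ha).symm⟩
  · rintro ⟨y, ⟨b, hb, rfl⟩, rfl⟩
    refine ⟨flipEvenDigits n b, flipEvenDigits_lt hb, ?_⟩
    rw [hshift _ (flipEvenDigits_lt hb), flipEvenDigits_flipEvenDigits hb]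

theorem stmt_6 (n : ℕ) (hn : 2 ≤ n) (z : ℂ) (hz : 1 < ‖z‖) :
    Fset n (-z) = (fun x => x - ((n : ℂ) - 1) * z / (z ^ 2 - 1)) '' Fset n z :=
  stmt_6_general n z hz
end

section
/- Let n ≥ 2 be an integer and z ∈ ℂ with |z|² = n, Im z > 0, and z² ∈ ℤ + zℤ (the periodicity condition). Then there exists an integer D with D² < 4n (equivalently D ∈ ℤ ∩ (−2√n, 2√n)) such that z = D/2 + i·√(n − (D/2)²) and z² = Dz − n. -/
/-! A non-real `z` is a root of its real minimal polynomial `X² - 2 Re z · X + |z|²`, and since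
`1, z` are `ℝ`-linearly independent, any relation `z² = a + b z` with `a, b` real must have
`b = 2 Re z` and `a = -|z|²`. So `D := b` works, and `D² = 4 (Re z)² < 4 |z|² = 4n`
because `Im z ≠ 0`. -/

namespace Complex

theorem sq_eq_two_re_mul_sub_normSq (z : ℂ) : z ^ 2 = 2 * z.re * z - normSq z := by
  rw [← mul_conj, ← ofReal_ofNat, ← ofReal_mul, ← add_conj]; ring

theorem eq_and_eq_of_add_mul_eq_add_mul {z : ℂ} (hz : z.im ≠ 0) {a b c d : ℝ}
    (h : (a : ℂ) + b * z = c + d * z) : a = c ∧ b = d := by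
  have him := congrArg Complex.im h
  have hre := congrArg Complex.re h
  simp only [add_re, add_im, ofReal_re, ofReal_im, re_ofReal_mul, im_ofReal_mul, zero_add]
    at him hre
  have hbd : b = d := mul_right_cancel₀ hz him
  exact ⟨by rw [hbd] at hre; linarith, hbd⟩

theorem sq_two_mul_re_lt_four_mul_normSq {z : ℂ} (hz : z.im ≠ 0) :
    (2 * z.re) ^ 2 < 4 * normSq z := by
  have := pow_pos (abs_pos.mpr hz) 2
  rw [normSq_apply, sq_abs] at *
  nlinarith

theorem eq_re_add_I_mul_sqrt_of_im_pos {z : ℂ} (hz : 0 < z.im) :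
    z = z.re + I * (Real.sqrt (normSq z - z.re ^ 2) : ℝ) := by
  have him : Real.sqrt (normSq z - z.re ^ 2) = z.im := by
    rw [normSq_apply, show z.re * z.re + z.im * z.im - z.re ^ 2 = z.im ^ 2 by ring]
    exact Real.sqrt_sq hz.le
  rw [him, mul_comm, re_add_im]

end Complex

open Complex in
theorem stmt_7_general (n : ℕ) (z : ℂ)
    (habs : ‖z‖ ^ 2 = n) (him : 0 < z.im)
    (hper : ∃ a b : ℤ, z ^ 2 = (a : ℂ) + (b : ℂ) * z) :
    ∃ D : ℤ, D ^ 2 < 4 * n ∧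
      z = (D : ℂ) / 2 + Complex.I * (Real.sqrt ((n : ℝ) - ((D : ℝ) / 2) ^ 2) : ℝ) ∧
      z ^ 2 = (D : ℂ) * z - (n : ℂ) := by
  obtain ⟨a, b, h⟩ := hper
  have hnorm : normSq z = n := by rw [normSq_eq_norm_sq, habs]
  have hrel :
      ((a : ℝ) : ℂ) + ((b : ℝ) : ℂ) * z = ((-n : ℝ) : ℂ) + ((2 * z.re : ℝ) : ℂ) * z := by
    rw [← hnorm]; push_cast; rw [← h, sq_eq_two_re_mul_sub_normSq]; ring
  obtain ⟨ha, hb⟩ := eq_and_eq_of_add_mul_eq_add_mul him.ne' hrel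
  have hD : (b : ℝ) / 2 = z.re := by rw [hb]; ring
  refine ⟨b, ?_, ?_, ?_⟩
  · have := sq_two_mul_re_lt_four_mul_normSq him.ne'
    rw [← hb, hnorm] at this
    exact_mod_cast this
  · rw [show (b : ℂ) / 2 = ((b / 2 : ℝ) : ℂ) by push_cast; rfl, hD, ← hnorm]
    exact eq_re_add_I_mul_sqrt_of_im_pos him
  · rw [h, show (a : ℂ) = ((a : ℝ) : ℂ) by norm_cast, ha]
    push_cast; ring

theorem stmt_7 (n : ℕ) (hn : 2 ≤ n) (z : ℂ)
    (habs : ‖z‖ ^ 2 = n) (him : 0 < z.im)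
    (hper : ∃ a b : ℤ, z ^ 2 = (a : ℂ) + (b : ℂ) * z) :
    ∃ D : ℤ, D ^ 2 < 4 * n ∧
      z = (D : ℂ) / 2 + Complex.I * (Real.sqrt ((n : ℝ) - ((D : ℝ) / 2) ^ 2) : ℝ) ∧
      z ^ 2 = (D : ℂ) * z - (n : ℂ) :=
  stmt_7_general n z habs him hper
end

section
/- Let n ≥ 2 and D be integers with D² < 4n, let z = D/2 + i·√(n − D²/4), and define the reduction map r : ℤ×ℤ → ℤ×ℤ by r(a,b) = (b + D·⌊a/n⌋, −⌊a/n⌋), with value map v(a,b) = a + bz ∈ ℂ. Then for every (a,b) ∈ ℤ×ℤ there exists k ∈ ℕ such that |v(r^k(a,b))| ≤ √n + 1, i.e., finitely many reductions bring any lattice point into the closed ball of radius √n + 1. -/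
/-!
Since `z² = D z - n`, one reduction satisfies `z · v (r p) = v p - d` with a digit `0 ≤ d ≤ n - 1`,
so `√n ‖v (r p)‖ ≤ ‖v p‖ + (n - 1)`. Outside the ball of radius `√n + 1` this strictly shrinks
`‖v p‖`, hence also `|v p|² = a² + abD + b²n`, which is a natural number; so the descent stops.
-/

theorem Function.exists_iterate_of_measure_lt {α : Type*} (f : α → α) (μ : α → ℕ)
    {P : α → Prop} (h : ∀ x, ¬ P x → μ (f x) < μ x) (x : α) : ∃ k, P (f^[k] x) := by
  induction hx : μ x using Nat.strong_induction_on generalizing x with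
  | _ m ih =>
    by_cases hPx : P x
    · exact ⟨0, hPx⟩
    · obtain ⟨k, hk⟩ := ih _ (hx ▸ h x hPx) (f x) rfl
      exact ⟨k + 1, hk⟩

theorem Complex.normSq_ofReal_add_ofReal_mul (a b : ℝ) (z : ℂ) :
    normSq (a + b * z) = a ^ 2 + 2 * a * b * z.re + b ^ 2 * normSq z := by
  simp only [normSq_apply, add_re, add_im, mul_re, mul_im, ofReal_re, ofReal_im]
  ring

theorem lt_of_mul_le_add_sq_sub_one {s x y : ℝ} (hs : 1 < s) (hy : s * y ≤ x + (s ^ 2 - 1))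
    (hx : s + 1 < x) : y < x := by
  nlinarith

theorem Complex.norm_intCast_fmod_le (a : ℤ) {n : ℤ} (hn : 0 < n) :
    ‖((a.fmod n : ℤ) : ℂ)‖ ≤ n - 1 := by
  rw [norm_intCast, abs_of_nonneg (by exact_mod_cast Int.fmod_nonneg_of_pos a hn)]
  exact_mod_cast Int.le_sub_one_of_lt (Int.fmod_lt_of_pos a hn)

theorem mul_reduction_eq_sub_fmod {R : Type*} [CommRing R] {z : R} {n D : ℤ}
    (hz : z ^ 2 = D * z - n) (a b : ℤ) :
    z * (((b + D * a.fdiv n : ℤ) : R) + ((-a.fdiv n : ℤ) : R) * z) =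
      a + b * z - (a.fmod n : ℤ) := by
  rw [Int.fmod_def]
  push_cast
  linear_combination (-(a.fdiv n : R)) * hz

noncomputable def periodicBase (n D : ℤ) : ℂ :=
  (D : ℂ) / 2 + Complex.I * (Real.sqrt ((n : ℝ) - (D : ℝ) ^ 2 / 4) : ℝ)

section periodicBase

variable {n D : ℤ}

theorem periodicBase_re : (periodicBase n D).re = D / 2 := by
  simp [periodicBase]

theorem normSq_periodicBase (hD : D ^ 2 < 4 * n) : Complex.normSq (periodicBase n D) = n := by
  have hD' : ((D : ℝ)) ^ 2 < 4 * n := by exact_mod_cast hD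
  have := Real.sq_sqrt (show (0 : ℝ) ≤ n - D ^ 2 / 4 by linarith)
  simp only [periodicBase, Complex.normSq_apply, Complex.add_re, Complex.add_im, Complex.mul_re,
    Complex.mul_im, Complex.I_re, Complex.I_im, Complex.ofReal_re, Complex.ofReal_im,
    Complex.div_ofNat_re, Complex.div_ofNat_im, Complex.intCast_re, Complex.intCast_im]
  nlinarith

theorem norm_periodicBase (hD : D ^ 2 < 4 * n) : ‖periodicBase n D‖ = √n := by
  rw [Complex.norm_def, normSq_periodicBase hD]

theorem periodicBase_sq (hD : D ^ 2 < 4 * n) :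
    periodicBase n D ^ 2 = D * periodicBase n D - n := by
  have hD' : ((D : ℝ)) ^ 2 < 4 * n := by exact_mod_cast hD
  have hy := Real.sq_sqrt (show (0 : ℝ) ≤ n - D ^ 2 / 4 by linarith)
  have hy' : ((√(n - D ^ 2 / 4 : ℝ) : ℝ) : ℂ) ^ 2 = n - D ^ 2 / 4 := by
    rw [← Complex.ofReal_pow, hy]
    push_cast
    ring
  rw [periodicBase]
  linear_combination Complex.I ^ 2 * hy' + ((n : ℂ) - D ^ 2 / 4) * Complex.I_sq

theorem normSq_intCast_add_intCast_mul_periodicBase (hD : D ^ 2 < 4 * n) (a b : ℤ) :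
    Complex.normSq (a + b * periodicBase n D) = ((a ^ 2 + a * b * D + b ^ 2 * n : ℤ) : ℝ) := by
  have := Complex.normSq_ofReal_add_ofReal_mul a b (periodicBase n D)
  push_cast at this ⊢
  rw [this, periodicBase_re, normSq_periodicBase hD]
  ring

end periodicBase

theorem stmt_8 (n D : ℤ) (hn : 2 ≤ n) (hD : D ^ 2 < 4 * n)
    (z : ℂ) (hz : z = (D : ℂ) / 2 + Complex.I * (Real.sqrt ((n : ℝ) - (D : ℝ) ^ 2 / 4) : ℝ))
    (r : ℤ × ℤ → ℤ × ℤ)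
    (hr : ∀ a b : ℤ, r (a, b) = (b + D * Int.fdiv a n, -(Int.fdiv a n)))
    (v : ℤ × ℤ → ℂ) (hv : ∀ a b : ℤ, v (a, b) = (a : ℂ) + (b : ℂ) * z) :
    ∀ p : ℤ × ℤ, ∃ k : ℕ, ‖v (r^[k] p)‖ ≤ Real.sqrt (n : ℝ) + 1 := by
  obtain rfl : z = periodicBase n D := hz
  have hsqrt : (1 : ℝ) < √n := Real.lt_sqrt_of_sq_lt (by norm_num; exact_mod_cast hn)
  have hcontract : ∀ p, √n * ‖v (r p)‖ ≤ ‖v p‖ + (n - 1) := by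
    rintro ⟨a, b⟩
    rw [← norm_periodicBase hD, ← norm_mul, hr, hv, hv,
      mul_reduction_eq_sub_fmod (periodicBase_sq hD)]
    exact (norm_sub_le _ _).trans (by gcongr; exact Complex.norm_intCast_fmod_le a (by omega))
  have hnormSq (p : ℤ × ℤ) :
      Complex.normSq (v p) = ((p.1 ^ 2 + p.1 * p.2 * D + p.2 ^ 2 * n : ℤ) : ℝ) := by
    rw [← normSq_intCast_add_intCast_mul_periodicBase hD, ← hv]
  intro p
  refine Function.exists_iterate_of_measure_lt (P := fun p ↦ ‖v p‖ ≤ √n + 1) r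
    (fun p ↦ (p.1 ^ 2 + p.1 * p.2 * D + p.2 ^ 2 * n).toNat) (fun q hq ↦ ?_) p
  have hnorm : ‖v (r q)‖ < ‖v q‖ := lt_of_mul_le_add_sq_sub_one hsqrt
    (by rw [Real.sq_sqrt (by positivity)]; exact hcontract q) (not_le.mp hq)
  have hdecr : Complex.normSq (v (r q)) < Complex.normSq (v q) := by
    simpa only [Complex.normSq_eq_norm_sq] using
      pow_lt_pow_left₀ hnorm (norm_nonneg _) two_ne_zero
  have hpos := Complex.normSq_nonneg (v (r q))
  rw [hnormSq, hnormSq] at hdecr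
  rw [hnormSq] at hpos
  have := Int.cast_lt.mp hdecr
  have := Int.cast_nonneg_iff.mp hpos
  omega
end

section
/- Let n ≥ 2 be an integer and z ∈ ℂ with |z|² = n. If x, y ∈ ℂ satisfy x − z·y ∈ {0,1,…,n−1} (a real integer digit) and |x| > √n + 1, then |y| < |x|. -/
/-! Since `|z| > 1` and `|x| > |z| + 1`, the digit `e ≤ |z|² - 1 = (|z| - 1)(|z| + 1)` is smaller than
`(|z| - 1)|x|`, so `|z||y| = |x - e| ≤ |x| + e < |z||x|`. -/

theorem norm_lt_of_norm_sub_mul_le {R : Type*} [SeminormedRing R] [NormMulClass R] {x y z : R}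
    (hz : 1 < ‖z‖) (hxy : ‖x - z * y‖ ≤ ‖z‖ ^ 2 - 1) (hx : ‖z‖ + 1 < ‖x‖) :
    ‖y‖ < ‖x‖ := by
  have hxy_lt : ‖x - z * y‖ < (‖z‖ - 1) * ‖x‖ :=
    calc ‖x - z * y‖ ≤ (‖z‖ - 1) * (‖z‖ + 1) := by linarith
      _ < (‖z‖ - 1) * ‖x‖ := by gcongr
  have : ‖z‖ * ‖y‖ < ‖z‖ * ‖x‖ :=
    calc ‖z‖ * ‖y‖ = ‖x - (x - z * y)‖ := by rw [sub_sub_cancel, norm_mul]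
      _ ≤ ‖x‖ + ‖x - z * y‖ := norm_sub_le _ _
      _ < ‖z‖ * ‖x‖ := by linarith
  exact lt_of_mul_lt_mul_left this (norm_nonneg z)

theorem stmt_10 (n : ℕ) (hn : 2 ≤ n) (z : ℂ) (habs : ‖z‖ ^ 2 = n)
    (x y : ℂ) (hdigit : ∃ e : ℕ, e < n ∧ x - z * y = (e : ℂ))
    (hx : Real.sqrt (n : ℝ) + 1 < ‖x‖) :
    ‖y‖ < ‖x‖ := by
  obtain ⟨e, he, heq⟩ := hdigit
  have hz : ‖z‖ = Real.sqrt n := by rw [← habs, Real.sqrt_sq (norm_nonneg z)]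
  have hz_gt_one : 1 < ‖z‖ := by
    rw [hz, Real.lt_sqrt zero_le_one, one_pow]
    exact_mod_cast hn
  have he_le : (e : ℝ) ≤ ‖z‖ ^ 2 - 1 := by
    rw [habs, le_sub_iff_add_le]
    exact_mod_cast he
  refine norm_lt_of_norm_sub_mul_le hz_gt_one ?_ (hz ▸ hx)
  rwa [heq, Complex.norm_natCast]
end

section
/- Let n ≥ 2 be an integer, D = 2, and z = 1 + i·√(n − 1) (so z² = 2z − n). Then the lattice splits as a disjoint union ℤ + zℤ = I_z ∪ ((z − 1) − I_z), where (z−1) − I_z = { z − 1 − x : x ∈ I_z }; moreover I_z and (z−1) − I_z are disjoint. -/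
/-- The integer-part set `I_z` for base `z` and digits `{0,…,n-1}`. -/
def Iset (n : ℕ) (z : ℂ) : Set ℂ :=
  { x | ∃ N : ℕ, ∃ a : ℕ → ℕ, (∀ i, a i < n) ∧
      x = ∑ i ∈ Finset.range (N + 1), (a i : ℂ) * z ^ i }

section aux
variable {n : ℕ} {z : ℂ}

lemma hz_im (hz : z = 1 + Complex.I * (Real.sqrt ((n : ℝ) - 1) : ℝ)) :
    z.im = Real.sqrt ((n : ℝ) - 1) := by
  simp [hz]

lemma hz_im_pos (hn : 2 ≤ n) (hz : z = 1 + Complex.I * (Real.sqrt ((n : ℝ) - 1) : ℝ)) :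
    0 < z.im := by
  rw [hz_im hz]
  apply Real.sqrt_pos.2
  have : (2:ℝ) ≤ (n:ℝ) := by exact_mod_cast hn
  linarith

lemma z_sq (hz : z = 1 + Complex.I * (Real.sqrt ((n : ℝ) - 1) : ℝ)) (hn : 2 ≤ n) :
    z ^ 2 = 2 * z - n := by
  have h0 : (0:ℝ) ≤ (n:ℝ) - 1 := by
    have : (2:ℝ) ≤ (n:ℝ) := by exact_mod_cast hn
    linarith
  have hw : ((Real.sqrt ((n : ℝ) - 1) : ℝ) : ℂ)^2 = (n:ℂ) - 1 := by
    rw [← Complex.ofReal_pow, Real.sq_sqrt h0]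
    push_cast; ring
  rw [hz]
  linear_combination (((Real.sqrt ((n : ℝ) - 1) : ℝ) : ℂ)^2) * Complex.I_sq - hw

lemma lattice_inj (hn : 2 ≤ n) (hz : z = 1 + Complex.I * (Real.sqrt ((n : ℝ) - 1) : ℝ))
    {p q p' q' : ℤ} (h : (p:ℂ) + q*z = (p':ℂ) + q'*z) : p = p' ∧ q = q' := by
  have him := congrArg Complex.im h
  have hre := congrArg Complex.re h
  simp [Complex.add_im, Complex.add_re, Complex.mul_im, Complex.mul_re] at him hre
  have hzim := hz_im_pos hn hz
  have hq : (q:ℝ) = q' := by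
    rcases him with h | h
    · exact_mod_cast h
    · exact absurd h (ne_of_gt hzim)
  have hq' : q = q' := by exact_mod_cast hq
  subst hq'
  constructor
  · have : (p:ℝ) = p' := by linarith [hre]
    exact_mod_cast this
  · rfl


lemma expand_sum (N : ℕ) (b : ℕ → ℕ) :
    ∑ i ∈ Finset.range (N + 2), (b i : ℂ) * z ^ i
      = (b 0 : ℂ) + z * ∑ i ∈ Finset.range (N + 1), (b (i+1) : ℂ) * z ^ i := by
  rw [Finset.sum_range_succ' (fun i => (b i : ℂ) * z ^ i) (N+1)]
  rw [Finset.mul_sum, add_comm]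
  congr 1
  · simp
  · apply Finset.sum_congr rfl
    intro i _
    ring

lemma zero_mem (hn : 2 ≤ n) : (0:ℂ) ∈ Iset n z := by
  refine ⟨0, fun _ => 0, fun i => by simpa using (by omega : 0 < n), ?_⟩
  simp

lemma shift_mem (hn : 2 ≤ n) {c : ℕ} (hc : c < n) {y : ℂ} (hy : y ∈ Iset n z) :
    (c:ℂ) + z * y ∈ Iset n z := by
  obtain ⟨N, a, ha, rfl⟩ := hy
  refine ⟨N + 1, fun i => if i = 0 then c else a (i - 1), fun i => by
    by_cases h : i = 0 <;> simp [h] <;> [exact hc; exact ha _], ?_⟩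
  rw [show N + 1 + 1 = N + 2 from rfl, expand_sum]
  simp

lemma digit_mem (hn : 2 ≤ n) {c : ℕ} (hc : c < n) : (c:ℂ) ∈ Iset n z := by
  have := shift_mem hn hc (zero_mem hn (z := z))
  simpa using this

lemma peel_mem (hn : 2 ≤ n) {x : ℂ} (hx : x ∈ Iset n z) :
    ∃ c : ℕ, c < n ∧ ∃ y ∈ Iset n z, x = (c:ℂ) + z * y := by
  obtain ⟨N, a, ha, rfl⟩ := hx
  refine ⟨a 0, ha 0, ?_⟩
  match N with
  | 0 =>
    exact ⟨0, zero_mem hn, by simp⟩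
  | (M+1) =>
    exact ⟨∑ i ∈ Finset.range (M+1), (a (i+1) : ℂ) * z ^ i,
      ⟨M, fun i => a (i+1), fun i => ha _, rfl⟩, expand_sum M a⟩

lemma Iset_lattice (hn : 2 ≤ n) (hz2 : z ^ 2 = 2*z - n) {x : ℂ} (hx : x ∈ Iset n z) :
    ∃ p q : ℤ, x = (p:ℂ) + q * z := by
  obtain ⟨N, a, ha, rfl⟩ := hx
  clear ha
  induction N with
  | zero => exact ⟨a 0, 0, by simp⟩
  | succ M IH =>
    obtain ⟨p, q, hpq⟩ := IH
    have hpow : ∀ i : ℕ, ∃ p q : ℤ, z ^ i = (p:ℂ) + q * z := by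
      intro i
      induction i with
      | zero => exact ⟨1, 0, by simp⟩
      | succ j IHj =>
        obtain ⟨p', q', h'⟩ := IHj
        refine ⟨-(n:ℤ)*q', p' + 2*q', ?_⟩
        rw [pow_succ, h']
        push_cast
        linear_combination (q':ℂ) * hz2
    obtain ⟨p', q', h'⟩ := hpow (M+1)
    refine ⟨p + (a (M+1)) * p', q + (a (M+1)) * q', ?_⟩
    rw [Finset.sum_range_succ, hpq, h']
    push_cast
    ring

lemma step_P (hn : 2 ≤ n) (hz2 : z ^ 2 = 2*z - n) {c : ℕ} (hc : c < n) {y : ℂ}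
    (hy : y ∈ Iset n z ∨ z - 1 - y ∈ Iset n z) :
    ((c:ℂ) + z * y ∈ Iset n z) ∨ (z - 1 - ((c:ℂ) + z * y) ∈ Iset n z) := by
  rcases hy with hy | hy
  · exact Or.inl (shift_mem hn hc hy)
  · right
    have hmem := shift_mem hn (show n - 1 - c < n by omega) hy
    have hcast : ((n - 1 - c : ℕ) : ℂ) = (n:ℂ) - 1 - c := by
      have h1 : c ≤ n - 1 := by omega
      have h2 : 1 ≤ n := by omega
      push_cast [Nat.cast_sub h1, Nat.cast_sub h2]
      ring
    have heq : z - 1 - ((c:ℂ) + z * y) = ((n - 1 - c : ℕ) : ℂ) + z * (z - 1 - y) := by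
      rw [hcast]
      linear_combination -hz2
    rw [heq]
    exact hmem

-- special case A (negative integers): a ∈ [-n, -1], b = 0
lemma specA (hn : 2 ≤ n) (hz2 : z ^ 2 = 2*z - n) {a : ℤ} (h1 : -n ≤ a) (h2 : a ≤ -1) :
    z - 1 - ((a:ℂ) + (0:ℤ) * z) ∈ Iset n z := by
  set c : ℕ := (-a-1).toNat with hc
  have hcast : ((c:ℤ)) = -a-1 := Int.toNat_of_nonneg (by omega)
  have hclt : c < n := by omega
  have hmem := shift_mem hn hclt (shift_mem hn (show 1 < n by omega) (zero_mem hn (z := z)))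
  have heq : z - 1 - ((a:ℂ) + (0:ℤ) * z) = (c:ℂ) + z * ((1:ℕ) + z * 0) := by
    have : ((c:ℂ)) = -(a:ℂ) - 1 := by exact_mod_cast congrArg (Int.cast : ℤ → ℂ) hcast
    rw [this]; push_cast; ring
  rw [heq]; exact hmem

-- special B: a ∈ [-n,-1], b = 1
lemma specB (hn : 2 ≤ n) (hz2 : z ^ 2 = 2*z - n) {a : ℤ} (h1 : -n ≤ a) (h2 : a ≤ -1) :
    z - 1 - ((a:ℂ) + (1:ℤ) * z) ∈ Iset n z := by
  set c : ℕ := (-a-1).toNat with hc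
  have hcast : ((c:ℤ)) = -a-1 := Int.toNat_of_nonneg (by omega)
  have hclt : c < n := by omega
  have hmem := digit_mem hn hclt (z := z)
  have heq : z - 1 - ((a:ℂ) + (1:ℤ) * z) = (c:ℂ) := by
    have : ((c:ℂ)) = -(a:ℂ) - 1 := by exact_mod_cast congrArg (Int.cast : ℤ → ℂ) hcast
    rw [this]; push_cast; ring
  rw [heq]; exact hmem

-- special C (n ≥ 3): a ∈ [-n,-1], b = -1
lemma specC (hn : 3 ≤ n) (hz2 : z ^ 2 = 2*z - n) {a : ℤ} (h1 : -n ≤ a) (h2 : a ≤ -1) :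
    z - 1 - ((a:ℂ) + (-1:ℤ) * z) ∈ Iset n z := by
  have hn2 : 2 ≤ n := by omega
  set c : ℕ := (-a-1).toNat with hc
  have hcast : ((c:ℤ)) = -a-1 := Int.toNat_of_nonneg (by omega)
  have hclt : c < n := by omega
  have hmem := shift_mem hn2 hclt (shift_mem hn2 (show 2 < n by omega) (zero_mem hn2 (z := z)))
  have heq : z - 1 - ((a:ℂ) + (-1:ℤ) * z) = (c:ℂ) + z * ((2:ℕ) + z * 0) := by
    have : ((c:ℂ)) = -(a:ℂ) - 1 := by exact_mod_cast congrArg (Int.cast : ℤ → ℂ) hcast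
    rw [this]; push_cast; ring
  rw [heq]; exact hmem

-- n = 2 specials. digits via chains.
-- x = -1-z = 1 + z + z^2 + z^5  (digits 1,1,1,0,0,1)
lemma specC2a (hn : n = 2) (hz2 : z ^ 2 = 2*z - n) :
    ((-1:ℤ):ℂ) + (-1:ℤ) * z ∈ Iset n z := by
  subst hn
  have h2 : 2 ≤ 2 := le_refl 2
  have h12 : 1 < 2 := one_lt_two
  have h02 : 0 < 2 := two_pos
  have hmem := shift_mem h2 h12 (shift_mem h2 h12 (shift_mem h2 h12 (shift_mem h2 h02
    (shift_mem h2 h02 (shift_mem h2 h12 (zero_mem h2 (z := z)))))))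
  have heq : ((-1:ℤ):ℂ) + (-1:ℤ) * z
      = ((1:ℕ):ℂ) + z * ((1:ℕ) + z * ((1:ℕ) + z * ((0:ℕ) + z * ((0:ℕ) + z * ((1:ℕ) + z * 0))))) := by
    push_cast
    linear_combination (-(z^3) - 2*z^2 - 2*z - 1) * hz2
  rw [heq]; exact hmem

-- x = -2-z = z + z^2 + z^5 (digits 0,1,1,0,0,1)
lemma specC2b (hn : n = 2) (hz2 : z ^ 2 = 2*z - n) :
    ((-2:ℤ):ℂ) + (-1:ℤ) * z ∈ Iset n z := by
  subst hn
  have h2 : 2 ≤ 2 := le_refl 2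
  have h12 : 1 < 2 := one_lt_two
  have h02 : 0 < 2 := two_pos
  have hmem := shift_mem h2 h02 (shift_mem h2 h12 (shift_mem h2 h12 (shift_mem h2 h02
    (shift_mem h2 h02 (shift_mem h2 h12 (zero_mem h2 (z := z)))))))
  have heq : ((-2:ℤ):ℂ) + (-1:ℤ) * z
      = ((0:ℕ):ℂ) + z * ((1:ℕ) + z * ((1:ℕ) + z * ((0:ℕ) + z * ((0:ℕ) + z * ((1:ℕ) + z * 0))))) := by
    push_cast
    linear_combination (-(z^3) - 2*z^2 - 2*z - 1) * hz2
  rw [heq]; exact hmem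

-- special E: n=2, x = -3 + z = 1 + z + z^4 (digits 1,1,0,0,1)
lemma specE (hn : n = 2) (hz2 : z ^ 2 = 2*z - n) :
    ((-3:ℤ):ℂ) + (1:ℤ) * z ∈ Iset n z := by
  subst hn
  have h2 : 2 ≤ 2 := le_refl 2
  have h12 : 1 < 2 := one_lt_two
  have h02 : 0 < 2 := two_pos
  have hmem := shift_mem h2 h12 (shift_mem h2 h12 (shift_mem h2 h02 (shift_mem h2 h02
    (shift_mem h2 h12 (zero_mem h2 (z := z))))))
  have heq : ((-3:ℤ):ℂ) + (1:ℤ) * z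
      = ((1:ℕ):ℂ) + z * ((1:ℕ) + z * ((0:ℕ) + z * ((0:ℕ) + z * ((1:ℕ) + z * 0)))) := by
    push_cast
    linear_combination (-(z^2) - 2*z - 2) * hz2
  rw [heq]; exact hmem

-- special D: x = 1 - z, ρ(x) = 2z-2 = (n-2) + z^2
lemma specD (hn : 2 ≤ n) (hz2 : z ^ 2 = 2*z - n) :
    z - 1 - (((1:ℤ):ℂ) + (-1:ℤ) * z) ∈ Iset n z := by
  set c : ℕ := n - 2 with hc
  have hclt : c < n := by omega
  have hmem := shift_mem hn hclt (shift_mem hn (show 0 < n by omega)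
    (shift_mem hn (show 1 < n by omega) (zero_mem hn (z := z))))
  have hcast : ((c:ℂ)) = (n:ℂ) - 2 := by
    have : ((c:ℤ)) = (n:ℤ) - 2 := by omega
    exact_mod_cast congrArg (Int.cast : ℤ → ℂ) this
  have heq : z - 1 - (((1:ℤ):ℂ) + (-1:ℤ) * z) = (c:ℂ) + z * ((0:ℕ) + z * ((1:ℕ) + z * 0)) := by
    rw [hcast]
    push_cast
    linear_combination -hz2
  rw [heq]; exact hmem
lemma sq_ge_of_le_neg {a w : ℤ} (ha : 0 ≤ a) (h : w ≤ -a) : a^2 ≤ w^2 := by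
  have h' : a ≤ -w := by linarith
  have := pow_le_pow_left₀ ha h' 2
  nlinarith [this]

lemma sq_ge_of_ge {a w : ℤ} (ha : 0 ≤ a) (h : a ≤ w) : a^2 ≤ w^2 :=
  pow_le_pow_left₀ ha h 2

set_option maxHeartbeats 1600000 in
lemma keyineq (n k c b : ℤ) (hn : 2 ≤ n) (hc0 : 0 ≤ c) (hc1 : c < n)
    (hA : ¬(b = 0 ∧ -n ≤ n*k+c ∧ n*k+c ≤ 0))
    (hB : ¬(b = 1 ∧ -n ≤ n*k+c ∧ n*k+c ≤ -1))
    (hC : ¬(b = -1 ∧ -n ≤ n*k+c ∧ n*k+c ≤ -1))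
    (hD : ¬(b = -1 ∧ n*k+c = 1))
    (hE : ¬(n = 2 ∧ b = 1 ∧ n*k+c = -3)) :
    (b + 2*k + -k)^2 + (n-1)*(-k)^2 < (n*k+c+b)^2 + (n-1)*b^2 := by
  by_contra Hc
  push_neg at Hc
  have hn0 : (0:ℤ) ≤ n := by omega
  have hn1 : (0:ℤ) ≤ n - 1 := by omega
  have hnpos : (0:ℤ) < n := by omega
  have hn1pos : (0:ℤ) < n - 1 := by omega
  have H2 : n*((n*k+b)+c)^2 + (n-1)^2*b^2 ≤ (n*k+b)^2 := by
    have hmul := mul_le_mul_of_nonneg_left Hc hn0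
    nlinarith [hmul]
  have M : (n-1)^3*b^2 + ((n-1)*(n*k+b) + n*c)^2 ≤ n*c^2 := by
    have hmul := mul_le_mul_of_nonneg_left H2 hn1
    nlinarith [hmul]
  have hcc : c^2 ≤ (n-1)^2 := sq_ge_of_ge hc0 (by omega)
  have hncc : n*c^2 ≤ n*(n-1)^2 := mul_le_mul_of_nonneg_left hcc hn0
  have hnc0 : 0 ≤ n*c := mul_nonneg hn0 hc0
  have hncn : n*c ≤ n*(n-1) := mul_le_mul_of_nonneg_left (by omega) hn0
  -- b ∈ {-1, 0, 1}
  have hb : b = -1 ∨ b = 0 ∨ b = 1 := by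
    by_contra hb
    have hb4 : 4 ≤ b^2 := by
      have : b ≤ -2 ∨ 2 ≤ b := by omega
      rcases this with h | h
      · nlinarith
      · nlinarith
    have h1 : (n-1)^3*4 ≤ (n-1)^3*b^2 :=
      mul_le_mul_of_nonneg_left hb4 (by positivity)
    have h2 : 4*(n-1)^3 ≤ n*(n-1)^2 := by
      nlinarith [M, sq_nonneg ((n-1)*(n*k+b) + n*c)]
    nlinarith [h2, hn]
  rcases hb with rfl | rfl | rfl
  · -- b = -1
    rcases (by omega : k ≤ -2 ∨ k = -1 ∨ k = 0 ∨ 1 ≤ k) with hk | rfl | rfl | hk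
    · -- k ≤ -2
      have p1 : n*k ≤ n*(-2) := mul_le_mul_of_nonneg_left hk hn0
      have p2 : (n-1)*(n*k + -1) ≤ (n-1)*(-2*n - 1) :=
        mul_le_mul_of_nonneg_left (by linarith) hn1
      have hw : (n-1)*(n*k + -1) + n*c ≤ -((n-1)*(n+1)) := by linarith
      have hsq := sq_ge_of_le_neg (mul_nonneg hn1 (by omega)) hw
      have q : (0:ℤ) < (n-1)^2 * (n^2 + 2*n) :=
        mul_pos (pow_pos hn1pos 2) (by positivity)
      linarith [M, hncc, hsq, q]
    · exact hC ⟨rfl, by omega, by omega⟩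
    · -- k = 0
      rcases (by omega : c = 0 ∨ c = 1 ∨ 2 ≤ c) with rfl | rfl | hc2
      · have q1 : (0:ℤ) < (n-1)^3 := pow_pos hn1pos 3
        have q2 : (0:ℤ) < (n-1)^2 := pow_pos hn1pos 2
        linarith [M, q1, q2]
      · exact hD ⟨rfl, by omega⟩
      · have hX : (0:ℤ) ≤ (n-1)*(n*c*(c-2)) :=
          mul_nonneg hn1 (mul_nonneg (mul_nonneg hn0 hc0) (by omega))
        have hone : (1:ℤ) ≤ (n-1)^2 := by nlinarith [hn1pos]
        have q1 : (0:ℤ) < (n-1)^3 := pow_pos hn1pos 3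
        linarith [M, hX, hone, q1]
    · -- 1 ≤ k
      have p1 : n*1 ≤ n*k := mul_le_mul_of_nonneg_left hk hn0
      have p2 : (n-1)*(n-1) ≤ (n-1)*(n*k + -1) :=
        mul_le_mul_of_nonneg_left (by linarith) hn1
      have hw : (n-1)*(n-1) ≤ (n-1)*(n*k + -1) + n*c := by linarith
      have hsq := sq_ge_of_ge (mul_nonneg hn1 hn1) hw
      have hle : ((n-1)*(n-1))^2 + (n-1)^3 ≤ n*(n-1)^2 := by linarith [M, hncc, hsq]
      have hn2 : n = 2 := by
        by_contra h
        have h3 : 3 ≤ n := by omega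
        have q : (0:ℤ) < (n-1)^2 * (n*(n-2)) :=
          mul_pos (pow_pos hn1pos 2) (mul_pos hnpos (by omega))
        linarith [hle, q]
      subst hn2
      rcases (by omega : c = 0 ∨ c = 1) with rfl | rfl
      · linarith [M, sq_nonneg ((2:ℤ)*k - 1)]
      · have h3 : (3:ℤ) ≤ 2*k + 1 := by omega
        have hsq2 : (3:ℤ)^2 ≤ (2*k+1)^2 := sq_ge_of_ge (by omega) h3
        linarith [M, hsq2]
  · -- b = 0
    rcases (by omega : k ≤ -2 ∨ k = -1 ∨ k = 0 ∨ 1 ≤ k) with hk | rfl | rfl | hk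
    · have p1 : (n-1)*k ≤ (n-1)*(-2) := mul_le_mul_of_nonneg_left hk hn1
      have ht : (n-1)*k + c ≤ -(n-1) := by linarith
      have hsq := sq_ge_of_le_neg hn1 ht
      have p := mul_le_mul_of_nonneg_left hsq (show (0:ℤ) ≤ n^2 by positivity)
      have q : (0:ℤ) < n*(n-1)^3 := mul_pos hnpos (pow_pos hn1pos 3)
      linarith [M, p, hncc, q]
    · exact hA ⟨rfl, by omega, by omega⟩
    · have hc' : c = 0 := by
        by_contra h
        have hcpos : (0:ℤ) < c := by omega
        have q : (0:ℤ) < n*c^2*(n-1) :=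
          mul_pos (mul_pos hnpos (pow_pos hcpos 2)) hn1pos
        linarith [M, q]
      exact hA ⟨rfl, by omega, by omega⟩
    · have p1 : (n-1)*1 ≤ (n-1)*k := mul_le_mul_of_nonneg_left hk hn1
      have ht : (n-1) ≤ (n-1)*k + c := by linarith
      have hsq := sq_ge_of_ge hn1 ht
      have p := mul_le_mul_of_nonneg_left hsq (show (0:ℤ) ≤ n^2 by positivity)
      have q : (0:ℤ) < n*(n-1)^3 := mul_pos hnpos (pow_pos hn1pos 3)
      linarith [M, p, hncc, q]
  · -- b = 1
    rcases (by omega : k ≤ -3 ∨ k = -2 ∨ k = -1 ∨ k = 0 ∨ 1 ≤ k) with hk | rfl | rfl | rfl | hk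
    · have p1 : n*k ≤ n*(-3) := mul_le_mul_of_nonneg_left hk hn0
      have p2 : (n-1)*(n*k + 1) ≤ (n-1)*(-3*n + 1) :=
        mul_le_mul_of_nonneg_left (by linarith) hn1
      have hw : (n-1)*(n*k + 1) + n*c ≤ -((n-1)*(2*n-1)) := by linarith
      have hsq := sq_ge_of_le_neg (mul_nonneg hn1 (by omega)) hw
      have q : (0:ℤ) < (n-1)^2 * (4*n^2 - 4*n) :=
        mul_pos (pow_pos hn1pos 2) (by nlinarith [hnpos, hn])
      linarith [M, hncc, hsq, q]
    · -- k = -2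
      have hw : (n-1)*(n*(-2) + 1) + n*c ≤ -((n-1)*(n-1)) := by linarith
      have hsq := sq_ge_of_le_neg (mul_nonneg hn1 hn1) hw
      have hle : ((n-1)*(n-1))^2 + (n-1)^3 ≤ n*(n-1)^2 := by linarith [M, hncc, hsq]
      have hn2 : n = 2 := by
        by_contra h
        have h3 : 3 ≤ n := by omega
        have q : (0:ℤ) < (n-1)^2 * (n*(n-2)) :=
          mul_pos (pow_pos hn1pos 2) (mul_pos hnpos (by omega))
        linarith [hle, q]
      subst hn2
      rcases (by omega : c = 0 ∨ c = 1) with rfl | rfl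
      · norm_num at M
      · exact hE ⟨rfl, rfl, by omega⟩
    · exact hB ⟨rfl, by omega, by omega⟩
    · -- k = 0
      have q1 : (0:ℤ) ≤ n*(n-1)*c^2 :=
        mul_nonneg (mul_nonneg hn0 hn1) (sq_nonneg c)
      have q2 : (0:ℤ) ≤ n*c*(n-1) := mul_nonneg hnc0 hn1
      have q3 : (0:ℤ) < (n-1)^2 := pow_pos hn1pos 2
      have q4 : (0:ℤ) < (n-1)^3 := pow_pos hn1pos 3
      linarith [M, q1, q2, q3, q4]
    · have p1 : n*1 ≤ n*k := mul_le_mul_of_nonneg_left hk hn0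
      have p2 : (n-1)*(n+1) ≤ (n-1)*(n*k + 1) :=
        mul_le_mul_of_nonneg_left (by linarith) hn1
      have hw : (n-1)*(n+1) ≤ (n-1)*(n*k + 1) + n*c := by linarith
      have hsq := sq_ge_of_ge (mul_nonneg hn1 (by omega)) hw
      have q : (0:ℤ) < (n-1)^2 * (n^2 + 2*n) :=
        mul_pos (pow_pos hn1pos 2) (by positivity)
      linarith [M, hncc, hsq, q]

lemma peel_len (hn : 2 ≤ n) (N : ℕ) (a : ℕ → ℕ) (ha : ∀ i, a i < n) :
    ∃ a' : ℕ → ℕ, (∀ i, a' i < n) ∧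
      ∑ i ∈ Finset.range (N+1), (a i:ℂ)*z^i
        = (a 0:ℂ) + z * ∑ i ∈ Finset.range ((N-1)+1), (a' i:ℂ)*z^i := by
  match N with
  | 0 =>
    refine ⟨fun _ => 0, fun i => by simpa using (by omega : 0 < n), ?_⟩
    simp
  | (M+1) =>
    refine ⟨fun i => a (i+1), fun i => ha _, ?_⟩
    simpa using expand_sum M a

lemma key_sum (hn : 2 ≤ n) (hz : z = 1 + Complex.I * (Real.sqrt ((n : ℝ) - 1) : ℝ)) :
    ∀ m N M : ℕ, N + M ≤ m → ∀ (a b : ℕ → ℕ), (∀ i, a i < n) → (∀ i, b i < n) →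
      (∑ i ∈ Finset.range (N+1), (a i:ℂ)*z^i) + (∑ i ∈ Finset.range (M+1), (b i:ℂ)*z^i)
        ≠ z - 1 := by
  have hz2 := z_sq hz hn
  have him := hz_im_pos hn hz
  intro m
  induction m with
  | zero =>
    intro N M hNM a b ha hb heq
    have hN : N = 0 := by omega
    have hM : M = 0 := by omega
    subst hN; subst hM
    simp only [zero_add, Finset.sum_range_one, pow_zero, mul_one] at heq
    have h2 := congrArg Complex.im heq
    simp [Complex.add_im, Complex.sub_im, Complex.natCast_im] at h2
    linarith [him, h2]
  | succ m IHm =>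
    intro N M hNM a b ha hb heq
    by_cases hNM0 : N = 0 ∧ M = 0
    · obtain ⟨rfl, rfl⟩ := hNM0
      simp only [zero_add, Finset.sum_range_one, pow_zero, mul_one] at heq
      have h2 := congrArg Complex.im heq
      simp [Complex.add_im, Complex.sub_im, Complex.natCast_im] at h2
      linarith [him, h2]
    · obtain ⟨a', ha', hXeq⟩ := peel_len hn N a ha
      obtain ⟨b', hb', hYeq⟩ := peel_len hn M b hb
      set X := ∑ i ∈ Finset.range ((N-1)+1), (a' i:ℂ)*z^i with hXdef
      set Y := ∑ i ∈ Finset.range ((M-1)+1), (b' i:ℂ)*z^i with hYdef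
      have hXI : X ∈ Iset n z := ⟨N-1, a', ha', rfl⟩
      have hYI : Y ∈ Iset n z := ⟨M-1, b', hb', rfl⟩
      obtain ⟨p, q, hX⟩ := Iset_lattice hn hz2 hXI
      obtain ⟨p', q', hY⟩ := Iset_lattice hn hz2 hYI
      -- z - 1 = (A - n(q+q')) + (p+p'+2(q+q')) z
      have hcomb : (((a 0 : ℤ) + (b 0 : ℤ) - n*(q+q') : ℤ):ℂ)
          + ((p + p' + 2*(q+q') : ℤ):ℂ) * z = ((-1 : ℤ):ℂ) + ((1:ℤ):ℂ) * z := by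
        push_cast
        rw [hXeq, hYeq, hX, hY] at heq
        linear_combination heq - ((q:ℂ) + (q':ℂ)) * hz2
      obtain ⟨e1, e2⟩ := lattice_inj hn hz hcomb
      -- derive q + q' = 1 and p + p' = -1
      have ha0 : (a 0 : ℤ) ≤ n - 1 := by have := ha 0; omega
      have hb0 : (b 0 : ℤ) ≤ n - 1 := by have := hb 0; omega
      have hQ : q + q' = 1 := by
        rcases lt_trichotomy (q + q') 1 with h | h | h
        · have h0 : q + q' ≤ 0 := by omega
          have : (n:ℤ)*(q+q') ≤ 0 :=
            mul_nonpos_of_nonneg_of_nonpos (by positivity) h0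
          omega
        · exact h
        · have h2' : (2:ℤ) ≤ q + q' := by omega
          have : (n:ℤ)*2 ≤ (n:ℤ)*(q+q') :=
            mul_le_mul_of_nonneg_left h2' (by positivity)
          omega
      have hP : p + p' = -1 := by omega
      -- so X + Y = z - 1, recurse
      have hXY : X + Y = z - 1 := by
        rw [hX, hY]
        have hq' : (q':ℤ) = 1 - q := by omega
        have hp' : (p':ℤ) = -1 - p := by omega
        rw [hq', hp']
        push_cast
        ring
      exact IHm (N-1) (M-1) (by omega) a' b' ha' hb' hXY

set_option maxHeartbeats 1600000 in
lemma main_ind (hn : 2 ≤ n) (hz : z = 1 + Complex.I * (Real.sqrt ((n : ℝ) - 1) : ℝ)) :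
    ∀ m : ℕ, ∀ a b : ℤ, ((a+b)^2 + ((n:ℤ)-1)*b^2).toNat = m →
      ((a:ℂ) + (b:ℂ)*z ∈ Iset n z ∨ z - 1 - ((a:ℂ) + (b:ℂ)*z) ∈ Iset n z) := by
  have hz2 := z_sq hz hn
  intro m
  induction m using Nat.strong_induction_on with
  | _ m IH =>
  intro a b hm
  by_cases hA : b = 0 ∧ -(n:ℤ) ≤ a ∧ a ≤ 0
  · obtain ⟨rfl, h1, h2⟩ := hA
    rcases (by omega : a = 0 ∨ a ≤ -1) with rfl | h2'
    · left
      simpa using zero_mem hn (z := z)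
    · right
      exact specA hn hz2 h1 h2'
  by_cases hB : b = 1 ∧ -(n:ℤ) ≤ a ∧ a ≤ -1
  · obtain ⟨rfl, h1, h2⟩ := hB
    right
    exact specB hn hz2 h1 h2
  by_cases hC : b = -1 ∧ -(n:ℤ) ≤ a ∧ a ≤ -1
  · obtain ⟨rfl, h1, h2⟩ := hC
    rcases (by omega : 3 ≤ n ∨ n = 2) with h3 | h3
    · right
      exact specC h3 hz2 h1 h2
    · left
      have h1' : (-2:ℤ) ≤ a := by rw [h3] at h1; exact_mod_cast h1
      rcases (by omega : a = -1 ∨ a = -2) with rfl | rfl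
      · exact specC2a h3 hz2
      · exact specC2b h3 hz2
  by_cases hD : b = -1 ∧ a = 1
  · obtain ⟨rfl, rfl⟩ := hD
    right
    exact specD hn hz2
  by_cases hE : n = 2 ∧ b = 1 ∧ a = -3
  · obtain ⟨h2, rfl, rfl⟩ := hE
    left
    exact specE h2 hz2
  -- generic step
  · set k : ℤ := a / (n:ℤ) with hk
    set c : ℤ := a % (n:ℤ) with hc
    have hnz : (n:ℤ) ≠ 0 := by positivity
    have hc0 : 0 ≤ c := Int.emod_nonneg a hnz
    have hc1 : c < n := Int.emod_lt_of_pos a (by positivity)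
    have ha : (n:ℤ)*k + c = a := Int.mul_ediv_add_emod a n
    have key := keyineq (n:ℤ) k c b (by exact_mod_cast hn) hc0 hc1
      (by rw [ha]; exact hA) (by rw [ha]; exact hB) (by rw [ha]; exact hC)
      (by rw [ha]; exact hD)
      (by rw [ha]; intro ⟨hx, hy, hw⟩; exact hE ⟨by exact_mod_cast hx, hy, hw⟩)
    rw [ha] at key
    have hn1z : (0:ℤ) ≤ (n:ℤ) - 1 := by
      have : (2:ℤ) ≤ (n:ℤ) := by exact_mod_cast hn
      omega
    have hL0 : (0:ℤ) ≤ (b + 2*k + -k)^2 + ((n:ℤ)-1)*(-k)^2 :=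
      add_nonneg (sq_nonneg _) (mul_nonneg hn1z (sq_nonneg _))
    have hRpos : (0:ℤ) < (a+b)^2 + ((n:ℤ)-1)*b^2 := lt_of_le_of_lt hL0 key
    have hlt : (((b+2*k) + -k)^2 + ((n:ℤ)-1)*(-k)^2).toNat < m := by
      rw [← hm]
      exact (Int.toNat_lt_toNat hRpos).mpr key
    have IHres := IH _ hlt (b+2*k) (-k) rfl
    have hcnat : c.toNat < n := by omega
    have hcast : ((c.toNat : ℕ):ℂ) = (c:ℂ) := by
      have : ((c.toNat : ℕ):ℤ) = c := Int.toNat_of_nonneg hc0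
      exact_mod_cast congrArg (Int.cast : ℤ → ℂ) this
    have haC : (a:ℂ) = (n:ℂ)*(k:ℂ) + (c:ℂ) := by exact_mod_cast congrArg (Int.cast : ℤ → ℂ) ha.symm
    have heq : (a:ℂ) + (b:ℂ)*z
        = ((c.toNat : ℕ):ℂ) + z * (((b+2*k : ℤ):ℂ) + ((-k : ℤ):ℂ)*z) := by
      rw [hcast]
      push_cast
      linear_combination haC + (k:ℂ) * hz2
    rw [heq]
    exact step_P hn hz2 hcnat IHres
end aux

theorem stmt_13 (n : ℕ) (hn : 2 ≤ n)
    (z : ℂ) (hz : z = 1 + Complex.I * (Real.sqrt ((n : ℝ) - 1) : ℝ)) :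
    { x : ℂ | ∃ a b : ℤ, x = (a : ℂ) + (b : ℂ) * z } =
        Iset n z ∪ ((fun x => (z - 1) - x) '' Iset n z) ∧
      Disjoint (Iset n z) ((fun x => (z - 1) - x) '' Iset n z) := by
  have hz2 := z_sq hz hn
  constructor
  · ext x
    simp only [Set.mem_setOf_eq, Set.mem_union, Set.mem_image]
    constructor
    · rintro ⟨a, b, rfl⟩
      rcases main_ind hn hz (((a+b)^2 + ((n:ℤ)-1)*b^2).toNat) a b rfl with h | h
      · exact Or.inl h
      · exact Or.inr ⟨_, h, by ring⟩
    · rintro (hx | ⟨y, hy, rfl⟩)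
      · obtain ⟨p, q, h⟩ := Iset_lattice hn hz2 hx
        exact ⟨p, q, h⟩
      · obtain ⟨p, q, h⟩ := Iset_lattice hn hz2 hy
        refine ⟨-1-p, 1-q, ?_⟩
        rw [h]; push_cast; ring
  · rw [Set.disjoint_left]
    rintro x hx ⟨y, hy, hxy⟩
    dsimp only at hxy
    obtain ⟨N, A, hA, hXe⟩ := hx
    obtain ⟨M, B, hB, hYe⟩ := hy
    apply key_sum hn hz (N+M) N M le_rfl A B hA hB
    rw [← hXe, ← hYe]
    linear_combination -hxy
end

section
/- Let n = 3, D = 3, and z = 3/2 + i·√3/2 (so z² = 3z − 3). Then the lattice splits as a disjoint union ℤ + zℤ = I_z ∪ ((2z − 4) − I_z) ∪ A_{z−2}, where A_{z−2} = ⋃_{k≥0} { (z−2)·z^k + ∑_{i=0}^{k−1} a_i z^i : each a_i ∈ {0,1,2} }, and the three sets are pairwise disjoint. -/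
/-- The attractor `A_s` of a reduction fixed point `s`:
lattice points reaching `s` after finitely many digit-discarding reductions. -/
def Aset (n : ℕ) (z : ℂ) (s : ℂ) : Set ℂ :=
  { x | ∃ k : ℕ, ∃ a : ℕ → ℕ, (∀ i, a i < n) ∧
      x = s * z ^ k + ∑ i ∈ Finset.range k, (a i : ℂ) * z ^ i }

namespace S14

/-- One digit-discarding reduction step on lattice coordinates `(a,b) ↔ a + b·z`. -/
def Tm (p : ℤ × ℤ) : ℤ × ℤ := (3 * (p.1 / 3) + p.2, -(p.1 / 3))

/-- Conjugation by the involution `x ↦ (2z-4) - x` on coordinates. -/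
def sg (p : ℤ × ℤ) : ℤ × ℤ := (-4 - p.1, 2 - p.2)

def Phi (z : ℂ) (p : ℤ × ℤ) : ℂ := (p.1 : ℂ) + (p.2 : ℂ) * z

lemma sg_sg (p : ℤ × ℤ) : sg (sg p) = p := by simp [sg]

lemma Tm_sg (p : ℤ × ℤ) : Tm (sg p) = sg (Tm p) := by
  unfold Tm sg
  rw [Prod.mk.injEq]
  constructor <;> simp only [] <;> omega

lemma semiconj : Function.Semiconj sg Tm Tm := fun p => (Tm_sg p).symm

def normI (p : ℤ × ℤ) : ℤ := p.1^2 + 3*p.1*p.2 + 3*p.2^2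

def normN (p : ℤ × ℤ) : ℕ := (normI p).toNat

lemma normI_nonneg (p : ℤ × ℤ) : 0 ≤ normI p := by
  have h1 := sq_nonneg (2*p.1 + 3*p.2)
  have h2 := sq_nonneg p.2
  unfold normI; nlinarith

lemma dich (p : ℤ × ℤ) :
    normN (Tm p) < normN p ∨ (-8 ≤ p.1 ∧ p.1 ≤ 8 ∧ -2 ≤ p.2 ∧ p.2 ≤ 2) := by
  obtain ⟨a, b⟩ := p
  by_cases hb : -8 ≤ a ∧ a ≤ 8 ∧ -2 ≤ b ∧ b ≤ 2
  · exact Or.inr hb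
  left
  set q : ℤ := a / 3 with hq
  set r : ℤ := a % 3 with hr
  have ha : a = 3*q + r ∧ 0 ≤ r ∧ r < 3 := by omega
  obtain ⟨ha1, ha2, ha3⟩ := ha
  have hInt : normI (Tm (a, b)) < normI (a, b) := by
    show normI (3*q + b, -q) < normI (a, b)
    unfold normI
    simp only []
    rw [ha1]
    rcases (by omega : 3 ≤ b ∨ b ≤ -3 ∨ (-2 ≤ b ∧ b ≤ 2 ∧ (q ≥ 3 ∨ q ≤ -3))) with h | h | ⟨hb1, hb2, hqq⟩
    · nlinarith [sq_nonneg (2*q + r + b)]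
    · nlinarith [sq_nonneg (2*q + r + b)]
    · have hs : 2*q + r + b ≥ 4 ∨ 2*q + r + b ≤ -2 := by omega
      have hb2' : b^2 ≥ 0 := sq_nonneg b
      rcases hs with hs | hs <;> nlinarith
  have h0 := normI_nonneg (Tm (a, b))
  unfold normN
  omega

def reachB : ℕ → ℤ × ℤ → Bool
  | 0, p => decide (p = (0,0) ∨ p = (-2,1) ∨ p = (-4,2))
  | (m+1), p => decide (p = (0,0) ∨ p = (-2,1) ∨ p = (-4,2)) || reachB m (Tm p)

lemma reachB_sound : ∀ (m : ℕ) (p : ℤ × ℤ), reachB m p = true →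
    ∃ k, Tm^[k] p = (0,0) ∨ Tm^[k] p = (-2,1) ∨ Tm^[k] p = (-4,2) := by
  intro m
  induction m with
  | zero => intro p h; exact ⟨0, by simpa [reachB] using h⟩
  | succ m ih =>
    intro p h
    rw [reachB, Bool.or_eq_true, decide_eq_true_eq] at h
    rcases h with h | h
    · exact ⟨0, by simpa using h⟩
    · obtain ⟨k, hk⟩ := ih (Tm p) h
      exact ⟨k+1, by simpa [Function.iterate_succ_apply] using hk⟩

lemma base_aux : ∀ i : ℕ, i < 17 → ∀ j : ℕ, j < 5 →
    reachB 8 ((i : ℤ) - 8, (j : ℤ) - 2) = true := by decide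

theorem reach (p : ℤ × ℤ) :
    ∃ m, Tm^[m] p = (0,0) ∨ Tm^[m] p = (-2,1) ∨ Tm^[m] p = (-4,2) := by
  have H : ∀ n : ℕ, ∀ p : ℤ × ℤ, normN p = n →
      ∃ m, Tm^[m] p = (0,0) ∨ Tm^[m] p = (-2,1) ∨ Tm^[m] p = (-4,2) := by
    intro n
    induction n using Nat.strong_induction_on with
    | _ n ih =>
      intro p hp
      rcases dich p with hd | hbox
      · obtain ⟨m, hm⟩ := ih (normN (Tm p)) (hp ▸ hd) (Tm p) rfl
        exact ⟨m+1, by simpa [Function.iterate_succ_apply] using hm⟩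
      · obtain ⟨h1, h2, h3, h4⟩ := hbox
        have hi : (p.1 + 8).toNat < 17 := by omega
        have hj : (p.2 + 2).toNat < 5 := by omega
        have key := base_aux _ hi _ hj
        have hpeq : (((p.1 + 8).toNat : ℤ) - 8, ((p.2 + 2).toNat : ℤ) - 2) = p := by
          rw [Prod.mk.injEq]; constructor <;> omega
        rw [hpeq] at key
        exact reachB_sound 8 p key
  exact H (normN p) p rfl

lemma fix0 : Tm (0,0) = (0,0) := by decide
lemma fix1 : Tm (-2,1) = (-2,1) := by decide
lemma fix2 : Tm (-4,2) = (-4,2) := by decide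

lemma unique_target {p f g : ℤ × ℤ} {m k : ℕ} (hf : Tm f = f) (hg : Tm g = g)
    (h1 : Tm^[m] p = f) (h2 : Tm^[k] p = g) : f = g := by
  rcases le_total m k with h | h
  · have : Tm^[k] p = f := by
      rw [(by omega : k = (k - m) + m), Function.iterate_add_apply, h1,
        Function.iterate_fixed hf]
    rw [← this, h2]
  · have : Tm^[m] p = g := by
      rw [(by omega : m = (m - k) + k), Function.iterate_add_apply, h2,
        Function.iterate_fixed hg]
    rw [← this, h1]


lemma Phi_inj {z : ℂ} (him : z.im ≠ 0) {p q : ℤ × ℤ} (h : Phi z p = Phi z q) : p = q := by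
  have h2 := congrArg Complex.im h
  simp only [Phi, Complex.add_im, Complex.mul_im, Complex.intCast_im, Complex.intCast_re,
    zero_add, zero_mul, add_zero] at h2
  have hb : (p.2 : ℝ) = (q.2 : ℝ) := mul_right_cancel₀ him h2
  have hb' : p.2 = q.2 := by exact_mod_cast hb
  have ha : (p.1 : ℂ) = (q.1 : ℂ) := by
    have h3 := h
    rw [Phi, Phi, hb'] at h3
    exact add_right_cancel h3
  have ha' : p.1 = q.1 := by exact_mod_cast ha
  exact Prod.ext ha' hb'

lemma Phi_step {z : ℂ} (hz2 : z^2 = 3*z - 3) (p : ℤ × ℤ) :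
    Phi z p = ((p.1 % 3 : ℤ) : ℂ) + z * Phi z (Tm p) := by
  have h : (p.1 : ℂ) = 3 * ((p.1 / 3 : ℤ) : ℂ) + ((p.1 % 3 : ℤ) : ℂ) := by
    exact_mod_cast (Int.mul_ediv_add_emod p.1 3).symm
  simp only [Phi, Tm]
  push_cast
  push_cast at h
  linear_combination h + ((p.1 / 3 : ℤ) : ℂ) * hz2

lemma Phi_digit {z : ℂ} (hz2 : z^2 = 3*z - 3) (him : z.im ≠ 0) {p p' : ℤ × ℤ} {c : ℤ}
    (hc0 : 0 ≤ c) (hc3 : c < 3)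
    (h : Phi z p = (c : ℂ) + z * Phi z p') : Tm p = p' := by
  have key : Phi z p = Phi z (c - 3 * p'.2, p'.1 + 3 * p'.2) := by
    rw [h]; simp only [Phi]; push_cast; linear_combination (p'.2 : ℂ) * hz2
  have hp := Phi_inj him key
  rw [hp]
  unfold Tm
  rw [Prod.mk.injEq]
  constructor <;> simp only [] <;> omega

lemma mul_rep {z : ℂ} (hz2 : z^2 = 3*z - 3) (p q : ℤ × ℤ) :
    ∃ r, Phi z p * Phi z q = Phi z r := by
  refine ⟨(p.1 * q.1 - 3 * (p.2 * q.2), p.1 * q.2 + p.2 * q.1 + 3 * (p.2 * q.2)), ?_⟩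
  simp only [Phi]; push_cast; linear_combination ((p.2 : ℂ) * (q.2 : ℂ)) * hz2

lemma add_rep {z : ℂ} (p q : ℤ × ℤ) : ∃ r, Phi z p + Phi z q = Phi z r := by
  refine ⟨(p.1 + q.1, p.2 + q.2), ?_⟩
  simp only [Phi]; push_cast; ring

lemma pow_rep {z : ℂ} (hz2 : z^2 = 3*z - 3) (k : ℕ) : ∃ p, z ^ k = Phi z p := by
  induction k with
  | zero => exact ⟨(1, 0), by simp [Phi]⟩
  | succ k ih =>
    obtain ⟨p, hp⟩ := ih
    obtain ⟨r, hr⟩ := mul_rep hz2 p (0, 1)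
    rw [(by simp [Phi] : Phi z ((0 : ℤ), (1 : ℤ)) = z)] at hr
    exact ⟨r, by rw [pow_succ, hp, hr]⟩

lemma sum_rep {z : ℂ} (hz2 : z^2 = 3*z - 3) (k : ℕ) (c : ℕ → ℕ) :
    ∃ p, ∑ i ∈ Finset.range k, (c i : ℂ) * z ^ i = Phi z p := by
  induction k with
  | zero => exact ⟨(0, 0), by simp [Phi]⟩
  | succ k ih =>
    obtain ⟨p, hp⟩ := ih
    obtain ⟨q, hq⟩ := pow_rep hz2 k
    obtain ⟨r, hr⟩ := mul_rep hz2 ((c k : ℤ), 0) q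
    obtain ⟨s, hs⟩ := add_rep p r
    rw [(by simp [Phi] : Phi z (((c k : ℕ) : ℤ), (0 : ℤ)) = ((c k : ℕ) : ℂ))] at hr
    refine ⟨s, ?_⟩
    rw [Finset.sum_range_succ, hp, hq, hr, hs]

lemma sum_shift {z : ℂ} (b : ℕ → ℂ) (N : ℕ) :
    ∑ i ∈ Finset.range (N + 1), b i * z ^ i
      = b 0 + z * ∑ i ∈ Finset.range N, b (i + 1) * z ^ i := by
  rw [Finset.sum_range_succ', Finset.mul_sum]
  simp only [pow_zero, mul_one]
  rw [add_comm]
  congr 1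
  exact Finset.sum_congr rfl (fun i _ => by ring)


lemma sum_cons {z : ℂ} (d : ℕ) (a : ℕ → ℕ) (k : ℕ) :
    ∑ i ∈ Finset.range (k + 1), (((if i = 0 then d else a (i - 1)) : ℕ) : ℂ) * z ^ i
      = (d : ℂ) + z * ∑ i ∈ Finset.range k, (a i : ℂ) * z ^ i := by
  rw [Finset.sum_range_succ', Finset.mul_sum]
  simp only [Nat.add_eq_zero, Nat.succ_ne_zero, and_false, if_false, Nat.add_sub_cancel,
    if_true, pow_zero, mul_one, if_pos rfl]
  rw [add_comm]
  congr 1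
  exact Finset.sum_congr rfl (fun i _ => by ring)

lemma toIter {z : ℂ} (hz2 : z^2 = 3*z - 3) (him : z.im ≠ 0) :
    ∀ (N : ℕ) (a : ℕ → ℕ) (p : ℤ × ℤ), (∀ i, a i < 3) →
      Phi z p = ∑ i ∈ Finset.range (N + 1), (a i : ℂ) * z ^ i → Tm^[N + 1] p = (0, 0) := by
  intro N
  induction N with
  | zero =>
    intro a p ha h
    have hd : Tm p = (0, 0) := by
      refine Phi_digit hz2 him (c := (a 0 : ℤ)) (Int.natCast_nonneg _)
        (by exact_mod_cast ha 0) ?_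
      rw [h]; simp [Phi]
    simpa using hd
    | succ N ih =>
    intro a p ha h
    rw [sum_shift (fun i => ((a i : ℕ) : ℂ)) (N + 1)] at h
    obtain ⟨p', hp'⟩ := sum_rep hz2 (N + 1) (fun i => a (i + 1))
    rw [hp'] at h
    have hd : Tm p = p' := by
      refine Phi_digit hz2 him (c := (a 0 : ℤ)) (Int.natCast_nonneg _)
        (by exact_mod_cast ha 0) ?_
      rw [h]; push_cast; ring
    have hrec := ih (fun i => a (i + 1)) p' (fun i => ha (i + 1)) hp'.symm
    rw [Function.iterate_succ_apply, hd]
    exact hrec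

lemma ofIter {z : ℂ} (hz2 : z^2 = 3*z - 3) :
    ∀ (m : ℕ) (p : ℤ × ℤ), Tm^[m] p = (0, 0) → Phi z p ∈ Iset 3 z := by
  intro m
  induction m with
  | zero =>
    intro p h
    simp only [Function.iterate_zero, id_eq] at h
    subst h
    exact ⟨0, fun _ => 0, by norm_num, by simp [Phi]⟩
  | succ m ih =>
    intro p h
    rw [Function.iterate_succ_apply] at h
    obtain ⟨N, a, ha, hEq⟩ := ih (Tm p) h
    refine ⟨N + 1, fun i => if i = 0 then (p.1 % 3).toNat else a (i - 1), ?_, ?_⟩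
    · intro i
      dsimp only
      split
      · omega
      · exact ha _
    · rw [sum_cons]
      have hc : (((p.1 % 3).toNat : ℕ) : ℂ) = ((p.1 % 3 : ℤ) : ℂ) := by
        have h1 : ((p.1 % 3).toNat : ℤ) = p.1 % 3 := Int.toNat_of_nonneg (by omega)
        exact_mod_cast congrArg (fun t : ℤ => (t : ℂ)) h1
      rw [hc, ← hEq]
      exact Phi_step hz2 p

lemma toIterA {z : ℂ} (hz2 : z^2 = 3*z - 3) (him : z.im ≠ 0) :
    ∀ (k : ℕ) (a : ℕ → ℕ) (p : ℤ × ℤ), (∀ i, a i < 3) →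
      Phi z p = (z - 2) * z ^ k + ∑ i ∈ Finset.range k, (a i : ℂ) * z ^ i →
      Tm^[k] p = (-2, 1) := by
  intro k
  induction k with
  | zero =>
    intro a p ha h
    simp only [pow_zero, mul_one, Finset.range_zero, Finset.sum_empty, add_zero] at h
    have : Phi z p = Phi z (-2, 1) := by rw [h]; simp [Phi]; ring
    simpa using Phi_inj him this
  | succ k ih =>
    intro a p ha h
    rw [sum_shift (fun i => ((a i : ℕ) : ℂ)) k] at h
    obtain ⟨q, hq⟩ := pow_rep hz2 k
    obtain ⟨r, hr⟩ := mul_rep hz2 ((-2 : ℤ), (1 : ℤ)) q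
    obtain ⟨s, hs⟩ := sum_rep hz2 k (fun i => a (i + 1))
    obtain ⟨t, ht⟩ := add_rep r s
    have h21 : Phi z ((-2 : ℤ), (1 : ℤ)) = z - 2 := by simp only [Phi]; push_cast; ring
    have hrep : Phi z t = (z - 2) * z ^ k + ∑ i ∈ Finset.range k, ((a (i + 1) : ℕ) : ℂ) * z ^ i := by
      rw [← ht, ← hr, h21, ← hq, ← hs]
    have hd : Tm p = t := by
      refine Phi_digit hz2 him (c := (a 0 : ℤ)) (Int.natCast_nonneg _)
        (by exact_mod_cast ha 0) ?_
      rw [h, hrep]; push_cast; ring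
    have hrec := ih (fun i => a (i + 1)) t (fun i => ha (i + 1)) hrep
    rw [Function.iterate_succ_apply, hd]
    exact hrec

lemma ofIterA {z : ℂ} (hz2 : z^2 = 3*z - 3) :
    ∀ (m : ℕ) (p : ℤ × ℤ), Tm^[m] p = (-2, 1) → Phi z p ∈ Aset 3 z (z - 2) := by
  intro m
  induction m with
  | zero =>
    intro p h
    simp only [Function.iterate_zero, id_eq] at h
    subst h
    refine ⟨0, fun _ => 0, by norm_num, ?_⟩
    simp [Phi]; ring
  | succ m ih =>
    intro p h
    rw [Function.iterate_succ_apply] at h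
    obtain ⟨k, a, ha, hEq⟩ := ih (Tm p) h
    refine ⟨k + 1, fun i => if i = 0 then (p.1 % 3).toNat else a (i - 1), ?_, ?_⟩
    · intro i
      dsimp only
      split
      · omega
      · exact ha _
    · rw [sum_cons]
      have hc : (((p.1 % 3).toNat : ℕ) : ℂ) = ((p.1 % 3 : ℤ) : ℂ) := by
        have h1 : ((p.1 % 3).toNat : ℤ) = p.1 % 3 := Int.toNat_of_nonneg (by omega)
        exact_mod_cast congrArg (fun t : ℤ => (t : ℂ)) h1
      rw [hc]
      have hstep := Phi_step hz2 p
      rw [hEq] at hstep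
      rw [hstep]
      ring

lemma iterate_sg (m : ℕ) : ∀ p : ℤ × ℤ, Tm^[m] (sg p) = sg (Tm^[m] p) := by
  induction m with
  | zero => intro p; simp
  | succ m ih =>
    intro p
    rw [Function.iterate_succ_apply, Tm_sg, ih, ← Function.iterate_succ_apply]

lemma Iset_char {z : ℂ} (hz2 : z^2 = 3*z - 3) (him : z.im ≠ 0) (x : ℂ) :
    x ∈ Iset 3 z ↔ ∃ p, x = Phi z p ∧ ∃ m, Tm^[m] p = (0, 0) := by
  constructor
  · rintro ⟨N, a, ha, rfl⟩
    obtain ⟨p, hp⟩ := sum_rep hz2 (N + 1) a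
    exact ⟨p, hp, N + 1, toIter hz2 him N a p ha hp.symm⟩
  · rintro ⟨p, rfl, m, hm⟩
    exact ofIter hz2 m p hm

lemma Aset_char {z : ℂ} (hz2 : z^2 = 3*z - 3) (him : z.im ≠ 0) (x : ℂ) :
    x ∈ Aset 3 z (z - 2) ↔ ∃ p, x = Phi z p ∧ ∃ m, Tm^[m] p = (-2, 1) := by
  constructor
  · rintro ⟨k, a, ha, rfl⟩
    obtain ⟨q, hq⟩ := pow_rep hz2 k
    obtain ⟨r, hr⟩ := mul_rep hz2 ((-2 : ℤ), (1 : ℤ)) q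
    obtain ⟨s, hs⟩ := sum_rep hz2 k a
    obtain ⟨t, ht⟩ := add_rep r s
    have h21 : Phi z ((-2 : ℤ), (1 : ℤ)) = z - 2 := by simp only [Phi]; push_cast; ring
    have hrep : (z - 2) * z ^ k + ∑ i ∈ Finset.range k, (a i : ℂ) * z ^ i = Phi z t := by
      rw [← ht, ← hr, h21, ← hq, ← hs]
    exact ⟨t, hrep, k, toIterA hz2 him k a t ha hrep.symm⟩
  · rintro ⟨p, rfl, m, hm⟩
    exact ofIterA hz2 m p hm

lemma Phi_sg {z : ℂ} (p : ℤ × ℤ) : Phi z (sg p) = (2 * z - 4) - Phi z p := by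
  simp only [Phi, sg]; push_cast; ring

lemma image_char {z : ℂ} (hz2 : z^2 = 3*z - 3) (him : z.im ≠ 0) (x : ℂ) :
    x ∈ ((fun y => (2 * z - 4) - y) '' Iset 3 z) ↔
      ∃ p, x = Phi z p ∧ ∃ m, Tm^[m] p = (-4, 2) := by
  constructor
  · rintro ⟨y, hy, rfl⟩
    rw [Iset_char hz2 him] at hy
    obtain ⟨q, rfl, m, hm⟩ := hy
    refine ⟨sg q, (Phi_sg q).symm, m, ?_⟩
    rw [iterate_sg, hm]
    rfl
  · rintro ⟨p, rfl, m, hm⟩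
    refine ⟨Phi z (sg p), ?_, ?_⟩
    · rw [Iset_char hz2 him]
      refine ⟨sg p, rfl, m, ?_⟩
      rw [iterate_sg, hm]
      rfl
    · have h := Phi_sg (z := z) (sg p)
      rw [sg_sg] at h
      simpa using h.symm


end S14

open S14 in
theorem stmt_14 (z : ℂ) (hz : z = 3 / 2 + Complex.I * (Real.sqrt 3 / 2 : ℝ)) :
    { x : ℂ | ∃ a b : ℤ, x = (a : ℂ) + (b : ℂ) * z } =
        Iset 3 z ∪ ((fun x => (2 * z - 4) - x) '' Iset 3 z) ∪ Aset 3 z (z - 2) ∧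
      Disjoint (Iset 3 z) ((fun x => (2 * z - 4) - x) '' Iset 3 z) ∧
      Disjoint (Iset 3 z) (Aset 3 z (z - 2)) ∧
      Disjoint ((fun x => (2 * z - 4) - x) '' Iset 3 z) (Aset 3 z (z - 2)) := by
  have h3 : Real.sqrt 3 ^ 2 = 3 := Real.sq_sqrt (by norm_num)
  have hs : ((Real.sqrt 3 : ℝ) : ℂ) ^ 2 = 3 := by
    exact_mod_cast congrArg (Complex.ofReal) h3
  have hz2 : z ^ 2 = 3 * z - 3 := by
    rw [hz]; push_cast
    linear_combination (((Real.sqrt 3 : ℝ) : ℂ) ^ 2 / 4) * Complex.I_sq - (1 / 4 : ℂ) * hs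
  have him : z.im ≠ 0 := by
    have h1 : z.im = Real.sqrt 3 / 2 := by rw [hz]; simp
    rw [h1]
    positivity
  refine ⟨?_, ?_, ?_, ?_⟩
  · ext x
    simp only [Set.mem_setOf_eq, Set.mem_union]
    constructor
    · rintro ⟨a, b, rfl⟩
      obtain ⟨m, hm | hm | hm⟩ := reach (a, b)
      · exact Or.inl (Or.inl ((Iset_char hz2 him _).mpr ⟨(a, b), rfl, m, hm⟩))
      · exact Or.inr ((Aset_char hz2 him _).mpr ⟨(a, b), rfl, m, hm⟩)
      · exact Or.inl (Or.inr ((image_char hz2 him _).mpr ⟨(a, b), rfl, m, hm⟩))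
    · rintro ((h | h) | h)
      · obtain ⟨p, hp, -⟩ := (Iset_char hz2 him x).mp h
        exact ⟨p.1, p.2, hp⟩
      · obtain ⟨p, hp, -⟩ := (image_char hz2 him x).mp h
        exact ⟨p.1, p.2, hp⟩
      · obtain ⟨p, hp, -⟩ := (Aset_char hz2 him x).mp h
        exact ⟨p.1, p.2, hp⟩
  · rw [Set.disjoint_left]
    intro x hx1 hx2
    obtain ⟨p, hp, m, hm⟩ := (Iset_char hz2 him x).mp hx1
    obtain ⟨q, hq, k, hk⟩ := (image_char hz2 him x).mp hx2
    cases Phi_inj him (hp.symm.trans hq)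
    exact absurd (unique_target fix0 fix2 hm hk) (by decide)
  · rw [Set.disjoint_left]
    intro x hx1 hx2
    obtain ⟨p, hp, m, hm⟩ := (Iset_char hz2 him x).mp hx1
    obtain ⟨q, hq, k, hk⟩ := (Aset_char hz2 him x).mp hx2
    cases Phi_inj him (hp.symm.trans hq)
    exact absurd (unique_target fix0 fix1 hm hk) (by decide)
  · rw [Set.disjoint_left]
    intro x hx1 hx2
    obtain ⟨p, hp, m, hm⟩ := (image_char hz2 him x).mp hx1
    obtain ⟨q, hq, k, hk⟩ := (Aset_char hz2 him x).mp hx2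
    cases Phi_inj him (hp.symm.trans hq)
    exact absurd (unique_target fix2 fix1 hm hk) (by decide)
end

section
/- Let n ≥ 2 be an integer, z ∈ ℂ with |z| > 1, and s ∈ ℂ with s·(1 − z) ∈ {0,1,…,n−1}. Define A_s = ⋃_{k≥0} ( s·z^k + { ∑_{i=0}^{k−1} a_i z^i : each a_i ∈ {0,1,…,n−1} } ). Then A_s satisfies the same selfsimilarity equation as the integer part: z·A_s + {0,1,…,n−1} = A_s, i.e., ⋃_{i=0}^{n−1}(z·A_s + i) = A_s. -/
/-!
Appending a digit `j` at the bottom of an expansion `s z^k + ∑_{i<k} a_i z^i` is Horner's step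
`x ↦ z x + j`, so `z A_s + {0,…,n-1} ⊆ A_s` holds for every `s`. Conversely an expansion of positive
length splits off its lowest digit; an expansion of length `0` is `s` itself, and the fixed-point
condition `s = z s + e` with `e < n` is exactly what writes it in the form `z y + j` with `y ∈ A_s`.
-/

open Finset

section Horner

variable {R : Type*} [CommSemiring R]

def digitExpansion (s z : R) (c : ℕ → R) (k : ℕ) : R :=
  s * z ^ k + ∑ i ∈ range k, c i * z ^ i

theorem digitExpansion_succ (s z : R) (c : ℕ → R) (k : ℕ) :
    digitExpansion s z c (k + 1) = z * digitExpansion s z (fun i => c (i + 1)) k + c 0 := by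
  have shift : ∑ i ∈ range k, c (i + 1) * z ^ (i + 1) = z * ∑ i ∈ range k, c (i + 1) * z ^ i := by
    rw [mul_sum]
    exact sum_congr rfl fun i _ => by ring
  rw [digitExpansion, digitExpansion, sum_range_succ', shift]
  ring

end Horner

section Attractor

variable {n : ℕ} {z s x : ℂ}

theorem mul_add_mem_Aset (hx : x ∈ Aset n z s) {j : ℕ} (hj : j < n) :
    z * x + j ∈ Aset n z s := by
  obtain ⟨k, a, ha, rfl⟩ := hx
  let b : ℕ → ℕ := fun | 0 => j | i + 1 => a i
  exact ⟨k + 1, b, fun | 0 => hj | i + 1 => ha i,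
    (digitExpansion_succ s z (fun i => (b i : ℂ)) k).symm⟩

theorem exists_mul_add_eq_of_mem_Aset {e : ℕ} (he : e < n) (hs : s * (1 - z) = e)
    (hx : x ∈ Aset n z s) : ∃ j < n, ∃ y ∈ Aset n z s, z * y + j = x := by
  obtain ⟨k, a, ha, rfl⟩ := hx
  cases k with
  | zero =>
    refine ⟨e, he, s, ⟨0, a, ha, by simp⟩, ?_⟩
    simp only [pow_zero, mul_one, range_zero, sum_empty, add_zero]
    linear_combination -hs
  | succ k =>
    exact ⟨a 0, ha 0, _, ⟨k, fun i => a (i + 1), fun i => ha _, rfl⟩,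
      (digitExpansion_succ s z (fun i => (a i : ℂ)) k).symm⟩

end Attractor

theorem stmt_15_general (n : ℕ) (z : ℂ)
    (s : ℂ) (hs : ∃ e : ℕ, e < n ∧ s * (1 - z) = (e : ℂ)) :
    ⋃ i ∈ Finset.range n, (fun x => z * x + (i : ℂ)) '' Aset n z s = Aset n z s := by
  obtain ⟨e, he, hse⟩ := hs
  ext x
  simp only [Set.mem_iUnion, Set.mem_image, mem_range, exists_prop]
  constructor
  · rintro ⟨j, hj, y, hy, rfl⟩
    exact mul_add_mem_Aset hy hj
  · exact exists_mul_add_eq_of_mem_Aset he hse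

theorem stmt_15 (n : ℕ) (hn : 2 ≤ n) (z : ℂ) (hz : 1 < ‖z‖)
    (s : ℂ) (hs : ∃ e : ℕ, e < n ∧ s * (1 - z) = (e : ℂ)) :
    ⋃ i ∈ Finset.range n, (fun x => z * x + (i : ℂ)) '' Aset n z s = Aset n z s :=
  stmt_15_general n z s hs
end
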